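/- arXiv:math/0007099 — 3 statements merged into one kernel-verified Lean document; each statement's English description precedes it below -/
import Mathlib

section
/- Let t : G → k^× be a group homomorphism, let z ∈ k^d, and let S ⊆ {1,…,d} be a subset such that (i) z_i ≠ 0 for every i ∉ S, and (ii) there exist vectors h_i ∈ ℤ^n for i ∈ S with h_i·v_j = δ_{ij} for all i, j ∈ S (the smoothness condition: {v_i}_{i∈S} is part of a ℤ-basis of ℤ^n). If t(q(e_i))·z_i = z_i for all i = 1,…,d, then t is the trivial homomorphism, i.e. t(g) = 1 for all g ∈ G. (Lemma 5.1: for every z in U = 𝔸^d ∖ V(𝔟), the stabilizer of z in the torus T = Hom(Cl(X), k^∗) is trivial, so all T-orbits in U have dimension d − n.) -/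
noncomputable section

/-- The map `ι : ℤ^n → ℤ^d`, `ι(h) = (h·v_1, …, h·v_d)`. -/
def iota (d n : ℕ) (v : Fin d → Fin n → ℤ) : (Fin n → ℤ) →+ (Fin d → ℤ) where
  toFun h := fun i => ∑ ℓ, h ℓ * v i ℓ
  map_zero' := by funext i; simp
  map_add' h h' := by funext i; simp [add_mul, Finset.sum_add_distrib]

lemma addChar_map_sum {ι A M : Type*} [AddCommMonoid A] [CommMonoid M]
    (ψ : AddChar A M) (s : Finset ι) (f : ι → A) :
    ψ (∑ i ∈ s, f i) = ∏ i ∈ s, ψ (f i) := by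
  induction s using Finset.cons_induction with
  | empty => simp
  | cons a s ha ih => simp [Finset.sum_cons, Finset.prod_cons, ψ.map_add_eq_mul, ih]

/-- Triviality of stabilizers (Lemma 5.1): let `t : G → k^×` be a character of
`G = ℤ^d/ι(ℤ^n)`, `z ∈ k^d`, and `S ⊆ {1,…,d}` a set such that `z_i ≠ 0` for `i ∉ S` and
`{v_i}_{i∈S}` is part of a `ℤ`-basis (dual vectors `h_i` exist).  If
`t(q(e_i))·z_i = z_i` for all `i`, then `t` is trivial. -/
theorem stabilizer_trivial (k : Type) [Field k] [CharZero k] [IsAlgClosed k]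
    (n d : ℕ) (v : Fin d → Fin n → ℤ)
    (t : AddChar ((Fin d → ℤ) ⧸ (iota d n v).range) kˣ)
    (z : Fin d → k) (S : Set (Fin d))
    (h1 : ∀ i ∉ S, z i ≠ 0)
    (h2 : ∃ h : Fin d → Fin n → ℤ, ∀ i ∈ S, ∀ j ∈ S,
      (∑ ℓ, h i ℓ * v j ℓ) = if i = j then 1 else 0)
    (ht : ∀ i : Fin d,
      ((t (QuotientAddGroup.mk' (iota d n v).range (Pi.single i 1)) : kˣ) : k) * z i = z i) :
    ∀ g, t g = 1 := by
  obtain ⟨h, hh⟩ := h2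
  set q := QuotientAddGroup.mk' (iota d n v).range with hq
  set u : Fin d → kˣ := fun i => t (q (Pi.single i 1)) with hu
  -- key: value of t on mk of any vector
  have key : ∀ x : Fin d → ℤ, t (q x) = ∏ i, u i ^ x i := by
    intro x
    have hx : x = ∑ i, (x i) • (Pi.single i 1 : Fin d → ℤ) := by
      funext j
      simp [Finset.sum_apply, Pi.single_apply]
    calc t (q x) = t (∑ i, (x i) • q (Pi.single i 1)) := by
            conv_lhs => rw [hx]
            rw [map_sum]
            simp only [map_zsmul]
      _ = ∏ i, t ((x i) • q (Pi.single i 1)) := addChar_map_sum t _ _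
      _ = ∏ i, u i ^ x i := by
            refine Finset.prod_congr rfl fun i _ => ?_
            rw [AddChar.map_zsmul_eq_zpow]
  -- u i = 1 for i ∉ S
  have huS : ∀ i ∉ S, u i = 1 := by
    intro i hi
    have := ht i
    have h1' := h1 i hi
    have : ((u i : kˣ) : k) = 1 := by
      apply mul_right_cancel₀ h1'
      rw [one_mul]
      exact this
    exact Units.ext this
  -- u i = 1 for i ∈ S
  have huAll : ∀ i, u i = 1 := by
    intro i
    by_cases hiS : i ∈ S
    · -- consider w = single i 1 - iota (h i)
      set w : Fin d → ℤ := Pi.single i 1 - iota d n v (h i) with hw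
      have hmk : q (Pi.single i 1) = q w := by
        rw [hw]
        have : q (iota d n v (h i)) = 0 := by
          rw [hq]
          simp only [QuotientAddGroup.mk'_apply]
          rw [QuotientAddGroup.eq_zero_iff]
          exact ⟨h i, rfl⟩
        rw [map_sub, this, sub_zero]
      have hwj : ∀ j ∈ S, w j = 0 := by
        intro j hj
        have := hh i hiS j hj
        simp only [hw, Pi.sub_apply, Pi.single_apply]
        show (if j = i then (1:ℤ) else 0) - (∑ ℓ, h i ℓ * v j ℓ) = 0
        rw [this]
        by_cases hij : i = j
        · subst hij; simp
        · rw [if_neg (Ne.symm hij), if_neg hij]; simp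
      have : u i = ∏ j, u j ^ w j := by
        rw [hu]; simp only []; rw [hmk]; exact key w
      rw [this]
      apply Finset.prod_eq_one
      intro j _
      by_cases hjS : j ∈ S
      · rw [hwj j hjS]; simp
      · rw [huS j hjS]; simp
    · exact huS i hiS
  intro g
  induction g using QuotientAddGroup.induction_on with
  | H x =>
    have := key x
    simp only [hq, QuotientAddGroup.mk'_apply] at this ⊢
    rw [this]
    apply Finset.prod_eq_one
    intro j _
    rw [huAll j]; simp
end
end

section
/- Let a ∈ ℤ^d and let e = (1,…,1) ∈ ℤ^d. Then X^e ∘ (X^{a⁺} ∘ D^{a⁻}) = X^{(a+e)⁺} ∘ D^{(a+e)⁻} ∘ Π_{i : a_i < 0} (θ_i + (a_i + 1)·id) in End_k(P), where the factors θ_i + (a_i+1)·id pairwise commute. (Key computation in the proof of Proposition 3.9 showing x^e is a non-zerodivisor on D_L(b̄).) -/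
/-! Everything happens one variable at a time. Operators built from `X_i, D_i` commute with those
built from `X_j, D_j` for `i ≠ j`, so both sides split as ordered products over `i` of
one-variable operators. In one variable, `D X = X D + 1` gives `D^n (X D) = (X D + n) D^n`, hence
`X D^{n+1} = D^n (θ - n)`: this is the factor for `a_i = -(n+1) < 0`, while for `a_i ≥ 0` the
factor is just `X^{a_i + 1}`. -/

open MvPolynomial

noncomputable section

/-- Multiplication by `x i` as a `k`-linear endomorphism of `P = k[x_1,…,x_d]`. -/
def Xop (k : Type) [Field k] (d : ℕ) (i : Fin d) :
    Module.End k (MvPolynomial (Fin d) k) :=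
  LinearMap.mulLeft k (X i)

/-- The partial derivative `∂/∂x_i` as a `k`-linear endomorphism of `P`. -/
def Dop (k : Type) [Field k] (d : ℕ) (i : Fin d) :
    Module.End k (MvPolynomial (Fin d) k) :=
  (pderiv i).toLinearMap

/-- The Euler operator `θ_i = X_i ∘ D_i`. -/
def theta (k : Type) [Field k] (d : ℕ) (i : Fin d) :
    Module.End k (MvPolynomial (Fin d) k) :=
  Xop k d i * Dop k d i

/-- `X^a = X_1^{a_1} ∘ ⋯ ∘ X_d^{a_d}` for `a ∈ ℕ^d`. -/
def Xpow (k : Type) [Field k] (d : ℕ) (a : Fin d → ℕ) :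
    Module.End k (MvPolynomial (Fin d) k) :=
  ((List.finRange d).map fun i => Xop k d i ^ a i).prod

/-- `D^a = D_1^{a_1} ∘ ⋯ ∘ D_d^{a_d}` for `a ∈ ℕ^d`. -/
def Dpow (k : Type) [Field k] (d : ℕ) (a : Fin d → ℕ) :
    Module.End k (MvPolynomial (Fin d) k) :=
  ((List.finRange d).map fun i => Dop k d i ^ a i).prod

section WeylRelation

variable {R : Type*} [Ring R] {x y : R}

theorem pow_mul_mul_eq_of_mul_eq_mul_add_one (h : y * x = x * y + 1) (n : ℕ) :
    y ^ n * (x * y) = (x * y + n) * y ^ n := by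
  induction n with
  | zero => simp
  | succ n ih =>
    calc y ^ (n + 1) * (x * y) = y * (y ^ n * (x * y)) := by rw [pow_succ', mul_assoc]
      _ = (y * x * y + n * y) * y ^ n := by rw [ih, (Nat.cast_commute n y).eq]; noncomm_ring
      _ = (x * y + (n + 1 : ℕ)) * y ^ (n + 1) := by rw [h, pow_succ']; push_cast; noncomm_ring

theorem mul_pow_succ_eq_of_mul_eq_mul_add_one (h : y * x = x * y + 1) (n : ℕ) :
    x * y ^ (n + 1) = y ^ n * (x * y - n) := by
  rw [mul_sub, pow_mul_mul_eq_of_mul_eq_mul_add_one h, ← (Nat.cast_commute n _).eq, pow_succ']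
  noncomm_ring

end WeylRelation

theorem List.prod_map_mul_prod_map_of_pairwise_commute {ι M : Type*} [Monoid M] {f g : ι → M}
    {l : List ι} (h : l.Pairwise fun i j => Commute (g i) (f j)) :
    (l.map f).prod * (l.map g).prod = (l.map fun i => f i * g i).prod := by
  induction l with
  | nil => simp
  | cons i t ih =>
    rw [List.pairwise_cons] at h
    have hcomm : Commute (g i) (t.map f).prod :=
      Commute.list_prod_right _ _ (by simpa using h.1)
    simp only [List.map_cons, List.prod_cons, ← ih h.2]
    rw [mul_assoc, ← mul_assoc (t.map f).prod, ← hcomm.eq, mul_assoc, mul_assoc]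

theorem List.prod_map_filter_eq_prod_map_ite {ι M : Type*} [Monoid M] (p : ι → Prop)
    [DecidablePred p] (f : ι → M) (l : List ι) :
    ((l.filter fun i => p i).map f).prod = (l.map fun i => if p i then f i else 1).prod := by
  induction l with
  | nil => rfl
  | cons i t ih => by_cases h : p i <;> simp [h, ih]

theorem MvPolynomial.pderiv_comm {σ R : Type*} [CommRing R] (i j : σ) (p : MvPolynomial σ R) :
    pderiv i (pderiv j p) = pderiv j (pderiv i p) := by
  classical
  have : ⁅pderiv i, pderiv j⁆ = (0 : Derivation R (MvPolynomial σ R) _) :=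
    derivation_ext fun l => by
      rw [Derivation.commutator_apply]
      simp [pderiv_X, Pi.single_apply, apply_ite]
  simpa [Derivation.commutator_apply, sub_eq_zero] using congrArg (· p) this

variable {k : Type} [Field k] {d : ℕ}

theorem Dop_mul_Xop_self (i : Fin d) : Dop k d i * Xop k d i = Xop k d i * Dop k d i + 1 :=
  LinearMap.ext fun p => by simp [Dop, Xop, add_comm]

theorem Xop_commute_Xop (i j : Fin d) : Commute (Xop k d i) (Xop k d j) :=
  LinearMap.ext fun p => by simp [Xop, mul_left_comm]

theorem Xop_commute_Dop_of_ne {i j : Fin d} (h : i ≠ j) : Commute (Xop k d i) (Dop k d j) :=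
  LinearMap.ext fun p => by simp [Xop, Dop, pderiv_X_of_ne h]

theorem Dop_commute_Dop (i j : Fin d) : Commute (Dop k d i) (Dop k d j) :=
  LinearMap.ext fun p => pderiv_comm i j p

def weylFactor (k : Type) [Field k] (d : ℕ) (i : Fin d) :
    Subalgebra k (Module.End k (MvPolynomial (Fin d) k)) :=
  Algebra.adjoin k {Xop k d i, Dop k d i}

theorem Xop_mem_weylFactor (i : Fin d) : Xop k d i ∈ weylFactor k d i :=
  Algebra.subset_adjoin (Set.mem_insert _ _)

theorem Dop_mem_weylFactor (i : Fin d) : Dop k d i ∈ weylFactor k d i :=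
  Algebra.subset_adjoin (Set.mem_insert_of_mem _ rfl)

theorem commute_of_mem_weylFactor {i j : Fin d} (hij : i ≠ j)
    {u v : Module.End k (MvPolynomial (Fin d) k)} (hu : u ∈ weylFactor k d i)
    (hv : v ∈ weylFactor k d j) : Commute u v := by
  refine Algebra.commute_of_mem_adjoin_of_forall_mem_commute hv ?_
  rintro w (rfl | rfl)
  all_goals
    refine (Algebra.commute_of_mem_adjoin_of_forall_mem_commute hu ?_).symm
    rintro z (rfl | rfl)
  · exact Xop_commute_Xop j i
  · exact Xop_commute_Dop_of_ne hij.symm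
  · exact (Xop_commute_Dop_of_ne hij).symm
  · exact Dop_commute_Dop j i

theorem theta_mem_weylFactor (i : Fin d) : theta k d i ∈ weylFactor k d i :=
  mul_mem (Xop_mem_weylFactor i) (Dop_mem_weylFactor i)

theorem Xop_pow_mul_Dop_pow_mem_weylFactor (i : Fin d) (p q : ℕ) :
    Xop k d i ^ p * Dop k d i ^ q ∈ weylFactor k d i :=
  mul_mem (pow_mem (Xop_mem_weylFactor i) p) (pow_mem (Dop_mem_weylFactor i) q)

theorem theta_add_zsmul_one_mem_weylFactor (i : Fin d) (c : ℤ) :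
    theta k d i + c • 1 ∈ weylFactor k d i :=
  add_mem (theta_mem_weylFactor i) (zsmul_mem (one_mem _) c)

theorem prod_finRange_mul_prod_finRange_of_mem_weylFactor
    {f g : Fin d → Module.End k (MvPolynomial (Fin d) k)} (hf : ∀ i, f i ∈ weylFactor k d i)
    (hg : ∀ i, g i ∈ weylFactor k d i) :
    ((List.finRange d).map f).prod * ((List.finRange d).map g).prod
      = ((List.finRange d).map fun i => f i * g i).prod :=
  List.prod_map_mul_prod_map_of_pairwise_commute <|
    (List.nodup_finRange d).imp fun hij => commute_of_mem_weylFactor hij (hg _) (hf _)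

theorem Xpow_mul_Dpow (p q : Fin d → ℕ) :
    Xpow k d p * Dpow k d q
      = ((List.finRange d).map fun i => Xop k d i ^ p i * Dop k d i ^ q i).prod :=
  prod_finRange_mul_prod_finRange_of_mem_weylFactor
    (fun i => pow_mem (Xop_mem_weylFactor i) _) (fun i => pow_mem (Dop_mem_weylFactor i) _)

theorem Xop_mul_Dop_pow_succ (i : Fin d) (n : ℕ) :
    Xop k d i * Dop k d i ^ (n + 1) = Dop k d i ^ n * (theta k d i + (-n : ℤ) • 1) := by
  rw [neg_smul, natCast_zsmul, nsmul_one, ← sub_eq_add_neg]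
  exact mul_pow_succ_eq_of_mul_eq_mul_add_one (Dop_mul_Xop_self i) n

theorem Xop_mul_Xop_pow_mul_Dop_pow (i : Fin d) (c : ℤ) :
    Xop k d i * (Xop k d i ^ c.toNat * Dop k d i ^ (-c).toNat)
      = Xop k d i ^ (c + 1).toNat * Dop k d i ^ (-(c + 1)).toNat
        * (if c < 0 then theta k d i + (c + 1) • 1 else 1) := by
  rcases lt_or_ge c 0 with hc | hc
  · obtain ⟨n, rfl⟩ : ∃ n : ℕ, c = -(n + 1) := ⟨(-c - 1).toNat, by omega⟩
    rw [if_pos hc, show (-((n : ℤ) + 1)).toNat = 0 by omega,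
      show (-(-((n : ℤ) + 1))).toNat = n + 1 by omega, show (-((n : ℤ) + 1) + 1).toNat = 0 by omega,
      show (-(-((n : ℤ) + 1) + 1)).toNat = n by omega, show -((n : ℤ) + 1) + 1 = -n by ring]
    simpa only [pow_zero, one_mul] using Xop_mul_Dop_pow_succ i n
  · lift c to ℕ using hc
    rw [if_neg (by omega), show ((c : ℤ) + 1).toNat = c + 1 by omega,
      show (-((c : ℤ) + 1)).toNat = 0 by omega]
    simp [pow_succ']

theorem theta_add_zsmul_one_commute (i j : Fin d) (m n : ℤ) :
    Commute (theta k d i + m • 1) (theta k d j + n • 1) := by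
  have hθ : Commute (theta k d i) (theta k d j) := by
    rcases eq_or_ne i j with rfl | hij
    · exact Commute.refl _
    · exact commute_of_mem_weylFactor hij (theta_mem_weylFactor i) (theta_mem_weylFactor j)
  simp only [zsmul_one]
  exact (hθ.add_right (Int.cast_commute n _).symm).add_left (Int.cast_commute m _)

theorem xe_mul_monomial_general (k : Type) [Field k] (d : ℕ)
    (a : Fin d → ℤ) :
    Xpow k d (fun _ => 1)
        * (Xpow k d (fun i => (a i).toNat) * Dpow k d (fun i => (-a i).toNat))
      = Xpow k d (fun i => (a i + 1).toNat) * Dpow k d (fun i => (-(a i + 1)).toNat)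
        * (((List.finRange d).filter fun i => a i < 0).map
            fun i => theta k d i + (a i + 1) • 1).prod ∧
    ∀ i j : Fin d, a i < 0 → a j < 0 →
      Commute (theta k d i + (a i + 1) • (1 : Module.End k (MvPolynomial (Fin d) k)))
        (theta k d j + (a j + 1) • 1) := by
  refine ⟨?_, fun i j _ _ => theta_add_zsmul_one_commute i j _ _⟩
  rw [Xpow_mul_Dpow, Xpow_mul_Dpow, List.prod_map_filter_eq_prod_map_ite, Xpow,
    prod_finRange_mul_prod_finRange_of_mem_weylFactor (fun i => pow_mem (Xop_mem_weylFactor i) 1)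
      (fun i => Xop_pow_mul_Dop_pow_mem_weylFactor i _ _),
    prod_finRange_mul_prod_finRange_of_mem_weylFactor
      (fun i => Xop_pow_mul_Dop_pow_mem_weylFactor i _ _)
      (fun i => by split_ifs; exacts [theta_add_zsmul_one_mem_weylFactor i _, one_mem _])]
  simp only [pow_one, Xop_mul_Xop_pow_mul_Dop_pow]

/-- For `a ∈ ℤ^d` and `e = (1,…,1)`:
`X^e ∘ (X^{a⁺} ∘ D^{a⁻}) = X^{(a+e)⁺} ∘ D^{(a+e)⁻} ∘ Π_{a_i<0}(θ_i + (a_i+1)·id)`,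
where the factors pairwise commute. -/
theorem xe_mul_monomial (k : Type) [Field k] [CharZero k] (d : ℕ) (hd : 1 ≤ d)
    (a : Fin d → ℤ) :
    Xpow k d (fun _ => 1)
        * (Xpow k d (fun i => (a i).toNat) * Dpow k d (fun i => (-a i).toNat))
      = Xpow k d (fun i => (a i + 1).toNat) * Dpow k d (fun i => (-(a i + 1)).toNat)
        * (((List.finRange d).filter fun i => a i < 0).map
            fun i => theta k d i + (a i + 1) • 1).prod ∧
    ∀ i j : Fin d, a i < 0 → a j < 0 →
      Commute (theta k d i + (a i + 1) • (1 : Module.End k (MvPolynomial (Fin d) k)))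
        (theta k d j + (a j + 1) • 1) :=
  xe_mul_monomial_general k d a
end
end

section
/- Let v_1,…,v_d ∈ ℤ^n be all nonzero, let b ∈ ℤ^d, and let L_0 be the ideal of W = k[θ_1,…,θ_d] generated by the affine-linear polynomials {Σ_i u_i·θ_i + Σ_i u_i·b_i : u ∈ ℤ^d with Σ_i u_i·v_i = 0 in ℤ^n}. Then L_0 is a prime ideal, no polynomial of the form θ_i + m with m ∈ ℤ belongs to L_0, and consequently for any finite set I ⊆ {1,…,d}, any integers m_i (i ∈ I), and any g ∈ W, if (Π_{i∈I}(θ_i + m_i))·g ∈ L_0 then g ∈ L_0. (Core commutative-algebra step in the proof of Proposition 3.9: the product Π_{a_i<0}(θ_i + a_i + 1) is a non-zerodivisor modulo L_0 because L_0 is prime and θ_i = θ_ū would force v_i = 0.) -/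
/-!
`L₀` is generated by the affine forms `ℓ_w = Σ_i w_i (θ_i + b_i)` with `w` in the `k`-span `U`
of the integer relations among the `v_i`. For a linear projection `P` onto `U`, the substitution
`θ_i ↦ θ_i - ℓ_{P eᵢ}` sends `ℓ_w` to `ℓ_{w - P w}`; it therefore kills `L₀` and is the identity
modulo `L₀`, so `L₀` is its kernel, a prime ideal. It sends `θ_i + m` to `ℓ_{eᵢ - P eᵢ}` plus a
constant, which vanishes only if `eᵢ ∈ U`, i.e. only if `v_i = 0`. By primality each `θ_i + m` is
then a non-zerodivisor modulo `L₀`.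
-/

open MvPolynomial

theorem Submodule.exists_isProj {K V : Type*} [DivisionRing K] [AddCommGroup V] [Module K V]
    (U : Submodule K V) : ∃ P : V →ₗ[K] V, LinearMap.IsProj U P :=
  let ⟨W, h⟩ := U.exists_isCompl
  ⟨U.projection W h, projection_apply_mem h, fun _ => projection_apply_of_mem_left h⟩

theorem Ideal.IsPrime.mem_of_prod_mul_mem {R ι : Type*} [CommSemiring R] {I : Ideal R}
    (hI : I.IsPrime) {s : Finset ι} {f : ι → R} (hf : ∀ i ∈ s, f i ∉ I) {g : R}
    (h : (∏ i ∈ s, f i) * g ∈ I) : g ∈ I :=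
  (hI.mem_or_mem h).resolve_left fun hprod =>
    let ⟨i, hi, hfi⟩ := Ideal.IsPrime.prod_mem_iff.1 hprod
    hf i hi hfi

/-- Modulo `I` the substitution is the identity. -/
theorem MvPolynomial.eq_ker_aeval_of_X_sub_mem {R σ : Type*} [CommRing R]
    {I : Ideal (MvPolynomial σ R)} {f : σ → MvPolynomial σ R}
    (hker : I ≤ RingHom.ker (aeval f)) (hX : ∀ i, X i - f i ∈ I) :
    I = RingHom.ker (aeval f) := by
  refine le_antisymm hker fun p hp => ?_
  have hmod : (Ideal.Quotient.mkₐ R I).comp (aeval f) = Ideal.Quotient.mkₐ R I :=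
    algHom_ext fun i => by simpa using (Ideal.Quotient.eq.2 (hX i)).symm
  have hp' := AlgHom.congr_fun hmod p
  rwa [AlgHom.comp_apply, RingHom.mem_ker.1 hp, map_zero, eq_comm, Ideal.Quotient.mkₐ_eq_mk,
    Ideal.Quotient.eq_zero_iff_mem] at hp'

section AffineForm

variable {k ι : Type*} [CommRing k] [Fintype ι]

noncomputable def affineForm (c : ι → k) : (ι → k) →ₗ[k] MvPolynomial ι k :=
  Fintype.linearCombination k fun i => X i + C (c i)

theorem affineForm_apply (c w : ι → k) :
    affineForm c w = ∑ i, w i • X i + C (∑ i, w i * c i) := by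
  simp [affineForm, Fintype.linearCombination_apply, smul_add, Finset.sum_add_distrib,
    smul_eq_C_mul]

theorem affineForm_single [DecidableEq ι] (c : ι → k) (i : ι) :
    affineForm c (Pi.single i 1) = X i + C (c i) := by
  simp [affineForm, Fintype.linearCombination_apply_single]

theorem coeff_single_affineForm (c w : ι → k) (j : ι) :
    coeff (Finsupp.single j 1) (affineForm c w) = w j := by
  classical
  simp [affineForm_apply, coeff_sum, coeff_X, coeff_C, Finsupp.single_eq_single_iff,
    eq_comm (a := (0 : ι →₀ ℕ))]

theorem eq_zero_of_affineForm_add_C_eq_zero {c w : ι → k} {a : k}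
    (h : affineForm c w + C a = 0) : w = 0 :=
  funext fun j => by
    classical
    simpa [coeff_single_affineForm, coeff_C, eq_comm (a := (0 : ι →₀ ℕ))] using
      congrArg (coeff (Finsupp.single j 1)) h

variable [DecidableEq ι]

noncomputable def affineRetraction (c : ι → k) (P : (ι → k) →ₗ[k] ι → k) :
    MvPolynomial ι k →ₐ[k] MvPolynomial ι k :=
  aeval fun i => X i - affineForm c (P (Pi.single i 1))

theorem affineRetraction_affineForm (c : ι → k) (P : (ι → k) →ₗ[k] ι → k) (w : ι → k) :
    affineRetraction c P (affineForm c w) = affineForm c (w - P w) := by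
  change ((affineRetraction c P).toLinearMap ∘ₗ affineForm c) w
    = (affineForm c ∘ₗ (LinearMap.id - P)) w
  congr 1
  ext i
  simp [affineRetraction, affineForm_single]
  ring

end AffineForm

section Field

variable {k ι : Type*} [Field k] [Fintype ι]

theorem affineForm_mem_span_image_of_mem_span (c : ι → k) {S : Set (ι → k)} {w : ι → k}
    (hw : w ∈ Submodule.span k S) : affineForm c w ∈ Ideal.span (affineForm c '' S) :=
  Submodule.span_le_restrictScalars k _ _ <|
    Submodule.map_span (affineForm c) S ▸ Submodule.mem_map_of_mem hw

variable [DecidableEq ι]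

theorem span_affineForm_image_eq_ker (c : ι → k) (S : Set (ι → k)) {P : (ι → k) →ₗ[k] ι → k}
    (hP : LinearMap.IsProj (Submodule.span k S) P) :
    Ideal.span (affineForm c '' S) = RingHom.ker (affineRetraction c P) := by
  refine eq_ker_aeval_of_X_sub_mem ?_ fun i => ?_
  · rw [Ideal.span_le]
    rintro _ ⟨s, hs, rfl⟩
    change affineRetraction c P (affineForm c s) = 0
    rw [affineRetraction_affineForm, hP.map_id s (Submodule.subset_span hs), sub_self, map_zero]
  · rw [sub_sub_cancel]
    exact affineForm_mem_span_image_of_mem_span c (hP.map_mem _)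

theorem isPrime_span_affineForm_image (c : ι → k) (S : Set (ι → k)) :
    (Ideal.span (affineForm c '' S)).IsPrime := by
  obtain ⟨P, hP⟩ := (Submodule.span k S).exists_isProj
  rw [span_affineForm_image_eq_ker c S hP]
  exact RingHom.ker_isPrime _

theorem X_add_C_notMem_span_affineForm_image (c : ι → k) {S : Set (ι → k)} {i : ι}
    (hi : Pi.single i 1 ∉ Submodule.span k S) (a : k) :
    X i + C a ∉ Ideal.span (affineForm c '' S) := by
  obtain ⟨P, hP⟩ := (Submodule.span k S).exists_isProj
  rw [span_affineForm_image_eq_ker c S hP, RingHom.mem_ker]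
  intro h
  have hshift : X i + C a = affineForm c (Pi.single i 1) + C (a - c i) := by
    rw [affineForm_single, map_sub]
    ring
  rw [hshift, map_add, affineRetraction_affineForm, affineRetraction, aeval_C] at h
  have hfix := sub_eq_zero.1 (eq_zero_of_affineForm_add_C_eq_zero h)
  exact hi (hfix ▸ hP.map_mem _)

end Field

/-- The span lies in the kernel of `w ↦ Σ_j w_j v_j`, which sends `eᵢ` to `vᵢ`. -/
theorem single_notMem_span_intRelations {k ι κ : Type*} [Field k] [CharZero k] [Fintype ι]
    [DecidableEq ι] (v : ι → κ → ℤ) {i : ι} (hv : v i ≠ 0) :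
    (Pi.single i 1 : ι → k) ∉
      Submodule.span k ((fun u j => (u j : k)) '' {u : ι → ℤ | ∑ j, u j • v j = 0}) := by
  set T := Fintype.linearCombination k fun l j => (v l j : k)
  have hker : Submodule.span k ((fun u j => (u j : k)) '' {u : ι → ℤ | ∑ j, u j • v j = 0})
      ≤ LinearMap.ker T := by
    rw [Submodule.span_le]
    rintro _ ⟨u, hu, rfl⟩
    ext l
    simpa [T, Fintype.linearCombination_apply] using congrArg (fun x => (x l : k)) hu
  intro hi
  apply hv
  ext l
  simpa [T, Fintype.linearCombination_apply_single] using congrFun (hker hi) l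

theorem affineForm_intCast {k ι : Type*} [CommRing k] [Fintype ι] (c u : ι → ℤ) :
    affineForm (fun i => (c i : k)) (fun i => (u i : k))
      = ∑ i, u i • X i + C ((∑ i, u i * c i : ℤ) : k) := by
  simp [affineForm_apply, Int.cast_smul_eq_zsmul]

/-- Let `L₀ ⊆ W = k[θ_1,…,θ_d]` be the ideal generated by the affine-linear polynomials
`Σ_i u_i θ_i + Σ_i u_i b_i` for `u ∈ ℤ^d` with `Σ_i u_i v_i = 0`, where all `v_i` are
nonzero.  Then `L₀` is prime, no `θ_i + m` (`m ∈ ℤ`) lies in `L₀`, and any product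
`Π_{i∈I}(θ_i + m_i)` is a non-zerodivisor modulo `L₀`. -/
theorem L0_prime_and_theta_nonzerodivisor (k : Type) [Field k] [CharZero k] (d n : ℕ)
    (v : Fin d → Fin n → ℤ) (hv : ∀ i, v i ≠ 0) (b : Fin d → ℤ) :
    let L0 : Ideal (MvPolynomial (Fin d) k) := Ideal.span {g | ∃ u : Fin d → ℤ,
      (∑ i, u i • v i) = 0 ∧ g = (∑ i, u i • X i) + C ((∑ i, u i * b i : ℤ) : k)}
    L0.IsPrime ∧
    (∀ (i : Fin d) (m : ℤ), X i + C ((m : ℤ) : k) ∉ L0) ∧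
    (∀ (I : Finset (Fin d)) (m : Fin d → ℤ) (g : MvPolynomial (Fin d) k),
      (∏ i ∈ I, (X i + C ((m i : ℤ) : k))) * g ∈ L0 → g ∈ L0) := by
  intro L0
  have hL0 : L0 = Ideal.span (affineForm (fun i => (b i : k)) ''
      ((fun u j => (u j : k)) '' {u : Fin d → ℤ | ∑ j, u j • v j = 0})) := by
    rw [Set.image_image]
    refine congrArg Ideal.span (Set.ext fun g => ?_)
    simp only [Set.mem_image, Set.mem_ofPred_eq, affineForm_intCast, eq_comm (a := g)]
  have hprime : L0.IsPrime := hL0 ▸ isPrime_span_affineForm_image _ _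
  have hX : ∀ (i : Fin d) (m : ℤ), X i + C ((m : ℤ) : k) ∉ L0 := fun i m =>
    hL0 ▸ X_add_C_notMem_span_affineForm_image _ (single_notMem_span_intRelations v (hv i)) _
  exact ⟨hprime, hX, fun I m g => hprime.mem_of_prod_mul_mem fun i _ => hX i (m i)⟩
end
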